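/- With notation as in the augmented acceptance-rejection chain, for every m ≥ 1 and every (x,y) ∈ ℝ^{2d}, the m-step kernel satisfies K_Z^m((x,y), ·) = [(1-α(x,y)) K_X^{m-1}(x,·) + α(x,y) K_X^{m-1}(y,·)] ⊙ q, where K_X^0(x,·) is the Dirac measure at x. -/

import Mathlib

/-!
A step of the augmented chain is an acceptance step `A(x,y) = (1-α) δ_x + α δ_y` followed by the
proposal step `G x = δ_x ⊙ q`, while a step of the marginal chain is `G` followed by `A`. Hence
`K_Z^{m+1} = A (G A)^m G = A K_X^m G`, and integrating a measure against `G` is exactly `· ⊙ q`.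
-/

open MeasureTheory ENNReal

/-- The measure `μ ⊙ q` on `ℝ^d × ℝ^d` with `(μ ⊙ q)(A × B) = ∫_A ∫_B q(y|x) dy dμ(x)`. -/
noncomputable def odotMeasure {d : ℕ} (q : (Fin d → ℝ) → (Fin d → ℝ) → ℝ)
    (μ : Measure (Fin d → ℝ)) : Measure ((Fin d → ℝ) × (Fin d → ℝ)) :=
  (μ.prod volume).withDensity fun p => ENNReal.ofReal (q p.1 p.2)

/-- The proposal measure `q(·|x)` as a measure on `ℝ^d`. -/
noncomputable def propMeasure {d : ℕ} (q : (Fin d → ℝ) → (Fin d → ℝ) → ℝ)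
    (x : Fin d → ℝ) : Measure (Fin d → ℝ) :=
  volume.withDensity fun y => ENNReal.ofReal (q x y)

/-- Marginal transition kernel `K_X` of the acceptance-rejection chain: draw `y ∼ q(·|x)`,
move to `y` with probability `α(x,y)` and stay at `x` otherwise. -/
noncomputable def accRejKernel {d : ℕ} (q : (Fin d → ℝ) → (Fin d → ℝ) → ℝ)
    (α : (Fin d → ℝ) → (Fin d → ℝ) → ℝ) (x : Fin d → ℝ) : Measure (Fin d → ℝ) :=
  (propMeasure q x).bind fun y =>
    ENNReal.ofReal (1 - α x y) • Measure.dirac x + ENNReal.ofReal (α x y) • Measure.dirac y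

/-- Transition kernel `K_Z` of the augmented chain `Z_k = (X_k, Y_k)`:
`K_Z((x,y), A×B) = (1-α(x,y)) 1_A(x) q(B|x) + α(x,y) 1_A(y) q(B|y)`. -/
noncomputable def augKernel {d : ℕ} (q : (Fin d → ℝ) → (Fin d → ℝ) → ℝ)
    (α : (Fin d → ℝ) → (Fin d → ℝ) → ℝ) (p : (Fin d → ℝ) × (Fin d → ℝ)) :
    Measure ((Fin d → ℝ) × (Fin d → ℝ)) :=
  ENNReal.ofReal (1 - α p.1 p.2) • (Measure.dirac p.1).prod (propMeasure q p.1)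
    + ENNReal.ofReal (α p.1 p.2) • (Measure.dirac p.2).prod (propMeasure q p.2)

/-- `m`-step iterate `κ^m(x, ·)` of a transition kernel, with `κ^0(x,·) = δ_x`. -/
noncomputable def iterKernel {β : Type*} [MeasurableSpace β]
    (κ : β → Measure β) : ℕ → β → Measure β
  | 0, x => Measure.dirac x
  | (m + 1), x => (iterKernel κ m x).bind κ

/-- Total variation distance between two measures (as a supremum over measurable events). -/
noncomputable def tvDist {β : Type*} [MeasurableSpace β] (μ ν : Measure β) : ℝ :=
  ⨆ s : Set β, |(μ s).toReal - (ν s).toReal|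

namespace MeasureTheory.Measure

variable {β γ : Type*} [MeasurableSpace β] [MeasurableSpace γ]

lemma bind_add (μ ν : Measure β) {f : β → Measure γ} (hf : Measurable f) :
    (μ + ν).bind f = μ.bind f + ν.bind f := by
  ext s hs
  simp only [bind_apply hs hf.aemeasurable, coe_add, Pi.add_apply, lintegral_add_measure]

end MeasureTheory.Measure

section iterKernel

variable {β γ : Type*} [MeasurableSpace β] [MeasurableSpace γ]

lemma measurable_iterKernel {κ : β → Measure β} (hκ : Measurable κ) (m : ℕ) :
    Measurable (iterKernel κ m) := by
  induction m with
  | zero => exact Measure.measurable_dirac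
  | succ m ih => exact (Measure.measurable_bind' hκ).comp ih

theorem iterKernel_succ_bind_swap {A : β → Measure γ} {G : γ → Measure β}
    (hA : Measurable A) (hG : Measurable G) (m : ℕ) (z : β) :
    iterKernel (fun z => (A z).bind G) (m + 1) z
      = ((A z).bind (iterKernel (fun x => (G x).bind A) m)).bind G := by
  have hAG : Measurable fun z => (A z).bind G := (Measure.measurable_bind' hG).comp hA
  have hGA : Measurable fun x => (G x).bind A := (Measure.measurable_bind' hA).comp hG
  induction m with
  | zero => simp [iterKernel, Measure.dirac_bind hAG]
  | succ m ih =>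
    have hI := measurable_iterKernel hGA m
    calc iterKernel (fun z => (A z).bind G) (m + 2) z
        = (((A z).bind (iterKernel (fun x => (G x).bind A) m)).bind G).bind
            fun w => (A w).bind G := by rw [iterKernel, ih]
      _ = ((A z).bind (iterKernel (fun x => (G x).bind A) m)).bind
            fun x => ((G x).bind A).bind G := by
          rw [Measure.bind_bind hG.aemeasurable hAG.aemeasurable]
          simp_rw [Measure.bind_bind hA.aemeasurable hG.aemeasurable]
      _ = ((A z).bind fun w => (iterKernel (fun x => (G x).bind A) m w).bind
            fun x => (G x).bind A).bind G := by
          rw [← Measure.bind_bind hGA.aemeasurable hG.aemeasurable,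
            Measure.bind_bind hI.aemeasurable hGA.aemeasurable]
      _ = ((A z).bind (iterKernel (fun x => (G x).bind A) (m + 1))).bind G := rfl

end iterKernel

section AcceptReject

variable {d : ℕ} {q α : (Fin d → ℝ) → (Fin d → ℝ) → ℝ}

noncomputable def acceptStep (α : (Fin d → ℝ) → (Fin d → ℝ) → ℝ)
    (p : (Fin d → ℝ) × (Fin d → ℝ)) : Measure (Fin d → ℝ) :=
  ENNReal.ofReal (1 - α p.1 p.2) • Measure.dirac p.1
    + ENNReal.ofReal (α p.1 p.2) • Measure.dirac p.2

noncomputable def proposalStep (q : (Fin d → ℝ) → (Fin d → ℝ) → ℝ) (x : Fin d → ℝ) :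
    Measure ((Fin d → ℝ) × (Fin d → ℝ)) :=
  (Measure.dirac x).prod (propMeasure q x)

instance (q : (Fin d → ℝ) → (Fin d → ℝ) → ℝ) (x : Fin d → ℝ) : SFinite (propMeasure q x) :=
  inferInstanceAs (SFinite (volume.withDensity _))

lemma measurable_acceptStep (hα_meas : Measurable (Function.uncurry α)) :
    Measurable (acceptStep α) := by
  refine Measure.measurable_of_measurable_coe _ fun s hs => ?_
  simp only [acceptStep, Measure.coe_add, Measure.coe_smul, Pi.add_apply, Pi.smul_apply,
    smul_eq_mul, Measure.dirac_apply' _ hs]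
  exact ((measurable_ofReal.comp (measurable_const.sub hα_meas)).mul
      ((measurable_one.indicator hs).comp measurable_fst)).add
    ((measurable_ofReal.comp hα_meas).mul ((measurable_one.indicator hs).comp measurable_snd))

lemma acceptStep_bind {β : Type*} [MeasurableSpace β] {f : (Fin d → ℝ) → Measure β}
    (hf : Measurable f) (p : (Fin d → ℝ) × (Fin d → ℝ)) :
    (acceptStep α p).bind f
      = ENNReal.ofReal (1 - α p.1 p.2) • f p.1 + ENNReal.ofReal (α p.1 p.2) • f p.2 := by
  rw [acceptStep, Measure.bind_add _ _ hf, Measure.bind_smul, Measure.bind_smul,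
    Measure.dirac_bind hf, Measure.dirac_bind hf]

lemma proposalStep_apply (x : Fin d → ℝ) {s : Set ((Fin d → ℝ) × (Fin d → ℝ))}
    (hs : MeasurableSet s) :
    proposalStep q x s = ∫⁻ y, s.indicator (fun p => ENNReal.ofReal (q p.1 p.2)) (x, y) := by
  rw [proposalStep, Measure.dirac_prod, Measure.map_apply measurable_prodMk_left hs, propMeasure,
    withDensity_apply _ (measurable_prodMk_left hs),
    ← lintegral_indicator (measurable_prodMk_left hs)]
  rfl

lemma measurable_proposalStep (hq_meas : Measurable (Function.uncurry q)) :
    Measurable (proposalStep q) := by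
  refine Measure.measurable_of_measurable_coe _ fun s hs => ?_
  simp only [proposalStep_apply _ hs]
  exact ((measurable_ofReal.comp hq_meas).indicator hs).lintegral_prod_right'

lemma odotMeasure_eq_bind (hq_meas : Measurable (Function.uncurry q)) (μ : Measure (Fin d → ℝ)) :
    odotMeasure q μ = μ.bind (proposalStep q) := by
  have hdensity : Measurable fun p : (Fin d → ℝ) × (Fin d → ℝ) => ENNReal.ofReal (q p.1 p.2) :=
    measurable_ofReal.comp hq_meas
  ext s hs
  rw [Measure.bind_apply hs (measurable_proposalStep hq_meas).aemeasurable, odotMeasure,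
    withDensity_apply _ hs, ← lintegral_indicator hs,
    lintegral_prod _ (hdensity.indicator hs).aemeasurable]
  exact lintegral_congr fun x => (proposalStep_apply x hs).symm

lemma augKernel_eq_bind (hq_meas : Measurable (Function.uncurry q)) :
    augKernel q α = fun p => (acceptStep α p).bind (proposalStep q) :=
  funext fun p => (acceptStep_bind (measurable_proposalStep hq_meas) p).symm

lemma accRejKernel_eq_bind (hα_meas : Measurable (Function.uncurry α)) :
    accRejKernel q α = fun x => (proposalStep q x).bind (acceptStep α) := by
  funext x
  rw [proposalStep, Measure.dirac_prod,
    ← Measure.bind_dirac_eq_map _ measurable_prodMk_left,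
    Measure.bind_bind (f := fun y => Measure.dirac (x, y))
      (Measure.measurable_dirac.comp measurable_prodMk_left).aemeasurable
      (measurable_acceptStep hα_meas).aemeasurable]
  simp_rw [Measure.dirac_bind (measurable_acceptStep hα_meas)]
  rfl

end AcceptReject

theorem augKernel_iterate_eq_odot_general
    {d : ℕ} (q : (Fin d → ℝ) → (Fin d → ℝ) → ℝ)
    (α : (Fin d → ℝ) → (Fin d → ℝ) → ℝ)
    (hq_meas : Measurable (Function.uncurry q))
    (hα_meas : Measurable (Function.uncurry α)) :
    ∀ (m : ℕ) (x y : Fin d → ℝ),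
      iterKernel (augKernel q α) (m + 1) (x, y)
        = odotMeasure q
            (ENNReal.ofReal (1 - α x y) • iterKernel (accRejKernel q α) m x
              + ENNReal.ofReal (α x y) • iterKernel (accRejKernel q α) m y) := by
  intro m x y
  have hA := measurable_acceptStep hα_meas
  have hG := measurable_proposalStep hq_meas
  have hX : Measurable (accRejKernel q α) := by
    rw [accRejKernel_eq_bind hα_meas]
    exact (Measure.measurable_bind' hA).comp hG
  rw [augKernel_eq_bind hq_meas, iterKernel_succ_bind_swap hA hG, ← accRejKernel_eq_bind hα_meas,
    acceptStep_bind (measurable_iterKernel hX m), odotMeasure_eq_bind hq_meas]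

/-- For every `m ≥ 1` (written `m + 1` with `m : ℕ`) and every `(x,y)`,
the `m+1`-step augmented kernel satisfies
`K_Z^{m+1}((x,y), ·) = [(1-α(x,y)) K_X^m(x,·) + α(x,y) K_X^m(y,·)] ⊙ q`. -/
theorem augKernel_iterate_eq_odot
    {d : ℕ} (q : (Fin d → ℝ) → (Fin d → ℝ) → ℝ)
    (α : (Fin d → ℝ) → (Fin d → ℝ) → ℝ)
    (hq_nonneg : ∀ x y, 0 ≤ q x y)
    (hq_meas : Measurable (Function.uncurry q))
    (hq_prob : ∀ x, ∫⁻ y, ENNReal.ofReal (q x y) = 1)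
    (hα : ∀ x y, α x y ∈ Set.Icc (0:ℝ) 1)
    (hα_meas : Measurable (Function.uncurry α)) :
    ∀ (m : ℕ) (x y : Fin d → ℝ),
      iterKernel (augKernel q α) (m + 1) (x, y)
        = odotMeasure q
            (ENNReal.ofReal (1 - α x y) • iterKernel (accRejKernel q α) m x
              + ENNReal.ofReal (α x y) • iterKernel (accRejKernel q α) m y) :=
  augKernel_iterate_eq_odot_general q α hq_meas hα_meas
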